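/- arXiv:1405.6630 — 8 statements merged into one kernel-verified Lean document; each statement's English description precedes it below -/
import Mathlib

section
/- In a single-peaked election whose number of voters is odd, there exists a Condorcet winner (a candidate who beats every other candidate in a strict pairwise majority). -/
/-!
Median voter theorem. Let `w` be a median of the voters' peaks on the axis. A voter whose peak
lies weakly left of `w` prefers `w` to every candidate right of `w`, by single-peakedness, and
symmetrically on the other side. Since the number of voters is odd, each of the two sides holds
a strict majority, so `w` beats every other candidate.
-/

open Finset

theorem Finite.exists_forall_ne_rel {α : Type*} [Finite α] [Nonempty α] {r : α → α → Prop}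
    (hirr : ∀ a, ¬ r a a) (htrans : ∀ a b c, r a b → r b c → r a c)
    (htotal : ∀ a b, a ≠ b → r a b ∨ r b a) :
    ∃ m, ∀ c ≠ m, r m c := by
  have : IsTrans α r := ⟨htrans⟩
  have : Std.Irrefl r := ⟨hirr⟩
  obtain ⟨m, -, hm⟩ :=
    (Finite.wellFounded_of_trans_of_irrefl r).has_min Set.univ Set.univ_nonempty
  exact ⟨m, fun c hc => (htotal c m hc).resolve_left (hm c trivial)⟩

theorem exists_median {ι α : Type*} [LinearOrder α] (s : Finset ι) (f : ι → α)
    (hs : Odd #s) :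
    ∃ m, #s < 2 * #{i ∈ s | f i ≤ m} ∧ #s < 2 * #{i ∈ s | m ≤ f i} := by
  obtain ⟨k, hk⟩ := hs
  -- The lower median: the least value of `f` with a strict majority of `s` weakly below it.
  set L := {i ∈ s | #s < 2 * #{j ∈ s | f j ≤ f i}}
  have hL : L.Nonempty := by
    obtain ⟨i, hi, hmax⟩ := s.exists_max_image f (card_pos.1 (by omega))
    refine ⟨i, mem_filter.2 ⟨hi, ?_⟩⟩
    rw [filter_true_of_mem hmax]
    omega
  obtain ⟨i, hiL, hmin⟩ := L.exists_min_image f hL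
  refine ⟨f i, (mem_filter.1 hiL).2, ?_⟩
  have hleft : 2 * #{j ∈ s | f j < f i} < #s := by
    by_contra! h
    obtain ⟨j, hj, hjmax⟩ :=
      exists_max_image {j ∈ s | f j < f i} f (card_pos.1 (by omega))
    obtain ⟨hjs, hji⟩ := mem_filter.1 hj
    have hsub : {j ∈ s | f j < f i} ⊆ {l ∈ s | f l ≤ f j} := fun l hl =>
      mem_filter.2 ⟨(mem_filter.1 hl).1, hjmax l hl⟩
    have hjL : j ∈ L := mem_filter.2 ⟨hjs, by have := card_le_card hsub; omega⟩
    exact (hmin j hjL).not_gt hji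
  have hsplit := card_filter_add_card_filter_not (s := s) (fun j => f i ≤ f j)
  simp only [not_le] at hsplit
  omega

theorem card_filter_lt_of_majority {ι : Type*} {s : Finset ι} {p q : ι → Prop}
    [DecidablePred p] [DecidablePred q] (hpq : ∀ i ∈ s, q i → ¬ p i)
    (hmaj : #s < 2 * #{i ∈ s | p i}) :
    #{i ∈ s | q i} < #{i ∈ s | p i} := by
  have hsub : {i ∈ s | q i} ⊆ {i ∈ s | ¬ p i} := fun i hi => by
    obtain ⟨his, hqi⟩ := mem_filter.1 hi
    exact mem_filter.2 ⟨his, hpq i his hqi⟩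
  have := card_le_card hsub
  have := card_filter_add_card_filter_not (s := s) fun i => p i
  omega

theorem rel_of_singlePeaked {C : Type*} [LinearOrder C] {r : C → C → Prop}
    (hsp : ∀ a b c : C, ((a < b ∧ b < c) ∨ (c < b ∧ b < a)) → r a b → r b c)
    {p : C} (hpeak : ∀ c ≠ p, r p c) {w c : C}
    (hbetween : (p ≤ w ∧ w < c) ∨ (c < w ∧ w ≤ p)) :
    r w c := by
  rcases eq_or_ne p w with rfl | hpw
  · rcases hbetween with ⟨-, h⟩ | ⟨h, -⟩
    exacts [hpeak c h.ne', hpeak c h.ne]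
  · refine hsp p w c ?_ (hpeak w hpw.symm)
    rcases hbetween with ⟨h₁, h₂⟩ | ⟨h₁, h₂⟩
    · exact .inl ⟨lt_of_le_of_ne h₁ hpw, h₂⟩
    · exact .inr ⟨h₁, lt_of_le_of_ne h₂ hpw.symm⟩

/-- In a single-peaked election with an odd number of voters there is a Condorcet winner. -/
theorem exists_condorcet_winner_of_singlePeaked_odd {C ι : Type*}
    [Fintype C] [Nonempty C] [LinearOrder C]
    (voters : Finset ι) (pref : ι → C → C → Prop)
    [∀ v a b, Decidable (pref v a b)]
    (hasym : ∀ v ∈ voters, ∀ a b : C, pref v a b → ¬ pref v b a)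
    (htotal : ∀ v ∈ voters, ∀ a b : C, a ≠ b → pref v a b ∨ pref v b a)
    (htrans : ∀ v ∈ voters, ∀ a b c : C, pref v a b → pref v b c → pref v a c)
    (hsp : ∀ v ∈ voters, ∀ a b c : C,
      ((a < b ∧ b < c) ∨ (c < b ∧ b < a)) → pref v a b → pref v b c)
    (hodd : Odd voters.card) :
    ∃ w : C, ∀ c' ≠ w,
      (voters.filter (fun v => pref v w c')).card >
        (voters.filter (fun v => pref v c' w)).card := by
  have hpeak_ex (v) (hv : v ∈ voters) : ∃ p, ∀ c ≠ p, pref v p c :=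
    Finite.exists_forall_ne_rel (fun a h => hasym v hv a a h h) (htrans v hv) (htotal v hv)
  choose! peak hpeak using hpeak_ex
  obtain ⟨w, hleft, hright⟩ := exists_median voters peak hodd
  refine ⟨w, fun c hc => card_filter_lt_of_majority (fun v hv => hasym v hv c w) ?_⟩
  rcases hc.lt_or_gt with hcw | hwc
  · refine hright.trans_le (Nat.mul_le_mul_left 2 (card_le_card fun v hv => ?_))
    obtain ⟨hv, hpv⟩ := mem_filter.1 hv
    exact mem_filter.2 ⟨hv, rel_of_singlePeaked (hsp v hv) (hpeak v hv) (.inr ⟨hcw, hpv⟩)⟩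
  · refine hleft.trans_le (Nat.mul_le_mul_left 2 (card_le_card fun v hv => ?_))
    obtain ⟨hv, hpv⟩ := mem_filter.1 hv
    exact mem_filter.2 ⟨hv, rel_of_singlePeaked (hsp v hv) (hpeak v hv) (.inl ⟨hpv, hwc⟩)⟩
end

section
/- (Median voter criterion) Let (C, V) be a single-peaked election with respect to axis L, let p ∈ C, let V_a be the voters whose top-ranked candidate precedes p on L, and V_b be the voters whose top-ranked candidate succeeds p on L. Then p is a Condorcet winner of (C,V) if and only if |V_a| < |V|/2 and |V_b| < |V|/2. -/
/-!
If `p` beats every other candidate, let `c` be the rightmost peak strictly left of `p`. By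
single-peakedness every voter whose peak lies left of `p` prefers `c` to `p`, so these voters
are outnumbered by the majority preferring `p` to `c`. Conversely, for `c < p` every voter
whose peak is at or right of `p` prefers `p` to `c`, and by hypothesis these voters form a
majority. The statements about the right of `p` are the same ones for the reversed axis `Cᵒᵈ`.
-/

open Finset

section SinglePeaked

variable {C : Type*} [LinearOrder C]

def IsSinglePeaked (r : C → C → Prop) : Prop :=
  ∀ a b c : C, ((a < b ∧ b < c) ∨ (c < b ∧ b < a)) → r a b → r b c

theorem IsSinglePeaked.dual {r : C → C → Prop} (hr : IsSinglePeaked r) :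
    IsSinglePeaked (C := Cᵒᵈ) r :=
  fun a b c hb => hr a b c (hb.imp And.symm And.symm).symm

theorem IsSinglePeaked.rel_of_peak_le_of_lt {r : C → C → Prop} {t b c : C}
    (hr : IsSinglePeaked r) (hpeak : ∀ c, c ≠ t → r t c) (htb : t ≤ b) (hbc : b < c) :
    r b c := by
  rcases htb.eq_or_lt with rfl | htb
  · exact hpeak c hbc.ne'
  · exact hr t b c (Or.inl ⟨htb, hbc⟩) (hpeak b htb.ne')

end SinglePeaked

section MedianVoter

variable {C ι : Type*} [LinearOrder C] {voters : Finset ι}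
  {pref : ι → C → C → Prop} [∀ v a b, Decidable (pref v a b)] {top : ι → C}

theorem exists_lt_filter_prefers_subset_filter_not_top_lt
    (hasym : ∀ v ∈ voters, ∀ a b : C, pref v a b → ¬ pref v b a)
    (hsp : ∀ v ∈ voters, IsSinglePeaked (pref v))
    (htop : ∀ v ∈ voters, ∀ c : C, c ≠ top v → pref v (top v) c)
    {p : C} (hleft : (voters.filter fun v => top v < p).Nonempty) :
    ∃ c < p, voters.filter (fun v => pref v p c) ⊆ voters.filter fun v => ¬ top v < p := by
  obtain ⟨w, hw, hmax⟩ := exists_max_image _ top hleft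
  have hwp : top w < p := (mem_filter.mp hw).2
  refine ⟨top w, hwp, fun v hv => ?_⟩
  obtain ⟨hvV, hvp⟩ := mem_filter.mp hv
  refine mem_filter.mpr ⟨hvV, fun hvlt => hasym v hvV _ _ hvp ?_⟩
  exact (hsp v hvV).rel_of_peak_le_of_lt (htop v hvV)
    (hmax v (mem_filter.mpr ⟨hvV, hvlt⟩)) hwp

theorem filter_not_top_lt_subset_filter_prefers
    (hsp : ∀ v ∈ voters, IsSinglePeaked (pref v))
    (htop : ∀ v ∈ voters, ∀ c : C, c ≠ top v → pref v (top v) c)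
    {p c : C} (hcp : c < p) :
    voters.filter (fun v => ¬ top v < p) ⊆ voters.filter fun v => pref v p c := by
  intro v hv
  obtain ⟨hvV, hpv⟩ := mem_filter.mp hv
  refine mem_filter.mpr ⟨hvV, ?_⟩
  exact (hsp v hvV).dual.rel_of_peak_le_of_lt (C := Cᵒᵈ) (htop v hvV) (not_lt.mp hpv) hcp

theorem two_mul_card_top_lt_lt_of_forall_majority (hV : voters.Nonempty)
    (hasym : ∀ v ∈ voters, ∀ a b : C, pref v a b → ¬ pref v b a)
    (hsp : ∀ v ∈ voters, IsSinglePeaked (pref v))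
    (htop : ∀ v ∈ voters, ∀ c : C, c ≠ top v → pref v (top v) c)
    {p : C} (hwin : ∀ c ≠ p, 2 * (voters.filter fun v => pref v p c).card > voters.card) :
    2 * (voters.filter fun v => top v < p).card < voters.card := by
  by_contra! hleft
  have hleft_ne : (voters.filter fun v => top v < p).Nonempty :=
    card_pos.mp (by have := hV.card_pos; omega)
  obtain ⟨c, hcp, hsub⟩ :=
    exists_lt_filter_prefers_subset_filter_not_top_lt hasym hsp htop hleft_ne
  have := card_le_card hsub
  have := hwin c hcp.ne
  have := card_filter_add_card_filter_not (s := voters) (p := fun v => top v < p)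
  omega

theorem majority_of_two_mul_card_top_lt
    (hsp : ∀ v ∈ voters, IsSinglePeaked (pref v))
    (htop : ∀ v ∈ voters, ∀ c : C, c ≠ top v → pref v (top v) c)
    {p c : C} (hcp : c < p) (hleft : 2 * (voters.filter fun v => top v < p).card < voters.card) :
    2 * (voters.filter fun v => pref v p c).card > voters.card := by
  have := card_le_card (filter_not_top_lt_subset_filter_prefers hsp htop hcp)
  have := card_filter_add_card_filter_not (s := voters) (p := fun v => top v < p)
  omega

end MedianVoter

theorem median_voter_criterion_general {C ι : Type*} [LinearOrder C]
    (voters : Finset ι) (hV : voters.Nonempty)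
    (pref : ι → C → C → Prop) [∀ v a b, Decidable (pref v a b)]
    (top : ι → C)
    (hasym : ∀ v ∈ voters, ∀ a b : C, pref v a b → ¬ pref v b a)
    (hsp : ∀ v ∈ voters, ∀ a b c : C,
      ((a < b ∧ b < c) ∨ (c < b ∧ b < a)) → pref v a b → pref v b c)
    (htop : ∀ v ∈ voters, ∀ c : C, c ≠ top v → pref v (top v) c)
    (p : C) :
    (∀ c ≠ p, 2 * (voters.filter (fun v => pref v p c)).card > voters.card) ↔
      (2 * (voters.filter (fun v => top v < p)).card < voters.card ∧
       2 * (voters.filter (fun v => p < top v)).card < voters.card) := by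
  have hsp_dual : ∀ v ∈ voters, IsSinglePeaked (C := Cᵒᵈ) (pref v) :=
    fun v hv => IsSinglePeaked.dual (hsp v hv)
  let _ : ∀ v (a b : Cᵒᵈ), Decidable (pref v a b) :=
    ‹∀ v (a b : C), Decidable (pref v a b)›
  constructor
  · intro hwin
    exact ⟨two_mul_card_top_lt_lt_of_forall_majority hV hasym hsp htop hwin,
      two_mul_card_top_lt_lt_of_forall_majority (C := Cᵒᵈ) hV hasym hsp_dual htop hwin⟩
  · rintro ⟨hleft, hright⟩ c hc
    rcases hc.lt_or_gt with hcp | hpc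
    · exact majority_of_two_mul_card_top_lt hsp htop hcp hleft
    · exact majority_of_two_mul_card_top_lt (C := Cᵒᵈ) hsp_dual htop hpc hright

/-- Median voter criterion: in a single-peaked election with at least one voter,
`p` is a Condorcet winner iff fewer than half the voters have their top candidate
strictly before `p` on the axis and fewer than half have it strictly after `p`. -/
theorem median_voter_criterion {C ι : Type*} [Fintype C] [LinearOrder C]
    (voters : Finset ι) (hV : voters.Nonempty)
    (pref : ι → C → C → Prop) [∀ v a b, Decidable (pref v a b)]
    (top : ι → C)
    (hasym : ∀ v ∈ voters, ∀ a b : C, pref v a b → ¬ pref v b a)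
    (htotal : ∀ v ∈ voters, ∀ a b : C, a ≠ b → pref v a b ∨ pref v b a)
    (htrans : ∀ v ∈ voters, ∀ a b c : C, pref v a b → pref v b c → pref v a c)
    (hsp : ∀ v ∈ voters, ∀ a b c : C,
      ((a < b ∧ b < c) ∨ (c < b ∧ b < a)) → pref v a b → pref v b c)
    (htop : ∀ v ∈ voters, ∀ c : C, c ≠ top v → pref v (top v) c)
    (p : C) :
    (∀ c ≠ p, 2 * (voters.filter (fun v => pref v p c)).card > voters.card) ↔
      (2 * (voters.filter (fun v => top v < p)).card < voters.card ∧
       2 * (voters.filter (fun v => p < top v)).card < voters.card) :=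
  median_voter_criterion_general voters hV pref top hasym hsp htop p
end

section
/- (Half of the median voter criterion) In a single-peaked election (C,V) with respect to axis L, if the set V_a of voters whose top candidate strictly precedes p under L satisfies |V_a| ≥ |V|/2 and there exists a candidate c ≠ p with c L p, then p is not a Condorcet winner; specifically the candidate c directly preceding p on L (restricted to C) satisfies N(c,p) ≥ N(p,c). -/
/-!
A voter whose peak lies strictly before `p` on the axis either has `c` as peak or has its peak
before `c`, since no candidate lies strictly between `c` and `p`; in both cases single-peakedness
gives `c ≻ p`. So at least half of the voters prefer `c` to `p`, and by asymmetry the voters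
preferring `p` to `c` are among the others.
-/

section SinglePeaked

variable {C : Type*} [LinearOrder C]

def SinglePeakedOn (s : Set C) (r : C → C → Prop) : Prop :=
  ∀ a b c : C, a ∈ s → b ∈ s → c ∈ s →
    ((a < b ∧ b < c) ∨ (c < b ∧ b < a)) → r a b → r b c

variable {s : Set C} {r : C → C → Prop}

theorem SinglePeakedOn.rel_of_lt_of_lt (hsp : SinglePeakedOn s r) {a b c : C} (ha : a ∈ s)
    (hb : b ∈ s) (hc : c ∈ s) (hab : a < b) (hbc : b < c) (h : r a b) : r b c :=
  hsp a b c ha hb hc (Or.inl ⟨hab, hbc⟩) h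

theorem SinglePeakedOn.rel_pred_of_peak_lt (hsp : SinglePeakedOn s r) {t c p : C} (ht : t ∈ s)
    (hpeak : ∀ x ∈ s, x ≠ t → r t x) (hc : c ∈ s) (hp : p ∈ s) (hcp : c < p)
    (hdirect : ∀ d ∈ s, ¬ (c < d ∧ d < p)) (htp : t < p) : r c p := by
  rcases eq_or_ne t c with rfl | htc
  · exact hpeak p hp hcp.ne'
  · have htc' : t < c := lt_of_not_ge fun hct =>
      hdirect t ht ⟨lt_of_le_of_ne hct htc.symm, htp⟩
    exact hsp.rel_of_lt_of_lt ht hc hp htc' hcp (hpeak c hc htc.symm)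

end SinglePeaked

theorem Finset.card_filter_le_card_filter_of_half {ι : Type*} (s : Finset ι)
    (P Q : ι → Prop) [DecidablePred P] [DecidablePred Q] (hQP : ∀ v ∈ s, Q v → ¬ P v)
    (hhalf : s.card ≤ 2 * (s.filter P).card) : (s.filter Q).card ≤ (s.filter P).card := by
  have hQ : (s.filter Q).card ≤ (s.filter fun v => ¬ P v).card :=
    card_le_card (monotone_filter_right s hQP)
  have hsplit := card_filter_add_card_filter_not (s := s) (p := P)
  omega

/-- Half of the median voter criterion: if at least half the voters have their top
candidate strictly before `p` on the axis, and `c` is the candidate directly preceding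
`p` on the axis (restricted to the candidate set), then `N(c,p) ≥ N(p,c)`; in
particular `p` is not a Condorcet winner. -/
theorem not_condorcet_of_half_before {C ι : Type*} [LinearOrder C]
    (Cs : Finset C) (voters : Finset ι)
    (pref : ι → C → C → Prop) [∀ v a b, Decidable (pref v a b)]
    (top : ι → C)
    (hasym : ∀ v ∈ voters, ∀ a b : C, pref v a b → ¬ pref v b a)
    (hsp : ∀ v ∈ voters, ∀ a b c : C, a ∈ Cs → b ∈ Cs → c ∈ Cs →
      ((a < b ∧ b < c) ∨ (c < b ∧ b < a)) → pref v a b → pref v b c)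
    (htop : ∀ v ∈ voters, top v ∈ Cs ∧ ∀ c ∈ Cs, c ≠ top v → pref v (top v) c)
    (p : C) (hp : p ∈ Cs)
    (c : C) (hc : c ∈ Cs) (hcp : c < p)
    (hdirect : ∀ d ∈ Cs, ¬ (c < d ∧ d < p))
    (hVa : 2 * (voters.filter (fun v => top v < p)).card ≥ voters.card) :
    (voters.filter (fun v => pref v c p)).card ≥
        (voters.filter (fun v => pref v p c)).card ∧
      ¬ (∀ c' ∈ Cs, c' ≠ p →
          (voters.filter (fun v => pref v p c')).card >
            (voters.filter (fun v => pref v c' p)).card) := by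
  have hbefore : ∀ v ∈ voters, top v < p → pref v c p := fun v hv htp =>
    have hspv : SinglePeakedOn (Cs : Set C) (pref v) := hsp v hv
    hspv.rel_pred_of_peak_lt (htop v hv).1 (htop v hv).2 hc hp hcp hdirect htp
  have hhalf : voters.card ≤ 2 * (voters.filter fun v => pref v c p).card :=
    hVa.trans <| Nat.mul_le_mul_left 2 <|
      Finset.card_le_card (Finset.monotone_filter_right voters hbefore)
  have hle := voters.card_filter_le_card_filter_of_half _ _
    (fun v hv hpc hcp' => hasym v hv p c hpc hcp') hhalf
  exact ⟨hle, fun hwin => (hwin c hc hcp.ne).not_ge hle⟩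
end

section
/- (Barrier lemma for single-peaked k-Approval) Let all voters be single-peaked with respect to an axis L over a candidate universe. Let H be a set of exactly k candidates, let X be a set of candidates all of which precede every member of H on L, let c ∈ X, and let z be the k-Approval score of c in the election with candidate set X ∪ H. Then for every set Y of candidates all of which succeed every member of H on L, the k-Approval score of c in the election with candidate set X ∪ H ∪ Y also equals z. -/
/-!
If fewer than `k = |H|` candidates of `X ∪ H` beat `c` in a voter's ranking, some `h ∈ H` does
not beat `c`, so the voter prefers `c` to `h`. As `c < h < y` for every `y ∈ Y`, single-peakedness
propagates this preference past `h`: the voter prefers `h` to `y`, hence `c` to `y`. So no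
candidate of `Y` beats `c`, and adding `Y` leaves the set of voters approving `c` unchanged.
-/

theorem not_rel_of_rel_of_lt_of_lt {C : Type*} [Preorder C] {r : C → C → Prop}
    (hasym : ∀ a b, r a b → ¬ r b a)
    (htrans : ∀ a b c, r a b → r b c → r a c)
    (hsp : ∀ a b c, a < b → b < c → r a b → r b c)
    {c h y : C} (hch : c < h) (hhy : h < y) (hrch : r c h) : ¬ r y c :=
  hasym c y (htrans c h y hrch (hsp c h y hch hhy hrch))

theorem Finset.exists_mem_not_of_card_filter_lt {α : Type*} {p : α → Prop} [DecidablePred p]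
    {S H : Finset α} (hHS : H ⊆ S) (hlt : (S.filter p).card < H.card) : ∃ h ∈ H, ¬ p h := by
  obtain ⟨h, hH, hnot⟩ := Finset.exists_mem_notMem_of_card_lt_card hlt
  exact ⟨h, hH, fun hp => hnot (Finset.mem_filter.mpr ⟨hHS hH, hp⟩)⟩

theorem Finset.filter_union_eq_left_of_forall_not {α : Type*} [DecidableEq α] {p : α → Prop}
    [DecidablePred p] {S Y : Finset α} (hY : ∀ y ∈ Y, ¬ p y) :
    (S ∪ Y).filter p = S.filter p := by
  rw [Finset.filter_union, Finset.filter_eq_empty_iff.mpr hY, Finset.union_empty]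

/-- Barrier lemma for single-peaked k-Approval: if `H` has exactly `k` candidates,
`X` lies entirely before `H` on the axis and `Y` entirely after `H`, then for
`c ∈ X` the k-Approval score of `c` in the election on `X ∪ H ∪ Y` equals its
k-Approval score in the election on `X ∪ H`. -/
theorem kApproval_barrier_lemma {C ι : Type*} [LinearOrder C] [DecidableEq C]
    (voters : Finset ι) (pref : ι → C → C → Prop)
    [∀ v a b, Decidable (pref v a b)]
    (hasym : ∀ v ∈ voters, ∀ a b : C, pref v a b → ¬ pref v b a)
    (htotal : ∀ v ∈ voters, ∀ a b : C, a ≠ b → pref v a b ∨ pref v b a)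
    (htrans : ∀ v ∈ voters, ∀ a b c : C, pref v a b → pref v b c → pref v a c)
    (hsp : ∀ v ∈ voters, ∀ a b c : C,
      ((a < b ∧ b < c) ∨ (c < b ∧ b < a)) → pref v a b → pref v b c)
    (k : ℕ) (H X Y : Finset C)
    (hH : H.card = k)
    (hX : ∀ x ∈ X, ∀ h ∈ H, x < h)
    (hY : ∀ y ∈ Y, ∀ h ∈ H, h < y)
    (c : C) (hc : c ∈ X) :
    (voters.filter
        (fun v => ((X ∪ H ∪ Y).filter (fun e => pref v e c)).card < k)).card =
      (voters.filter
        (fun v => ((X ∪ H).filter (fun e => pref v e c)).card < k)).card := by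
  congr 1
  refine Finset.filter_congr fun v hv => ⟨fun hlt => ?_, fun hlt => ?_⟩
  · exact (Finset.card_le_card (Finset.filter_subset_filter _ Finset.subset_union_left)).trans_lt
      hlt
  · obtain ⟨h, hh, hnot⟩ := Finset.exists_mem_not_of_card_filter_lt Finset.subset_union_right
      (hH ▸ hlt)
    have hch : c < h := hX c hc h hh
    have hrch : pref v c h := (htotal v hv h c hch.ne').resolve_left hnot
    have hYnot : ∀ y ∈ Y, ¬ pref v y c := fun y hy =>
      not_rel_of_rel_of_lt_of_lt (hasym v hv) (htrans v hv)
        (fun a b c hab hbc => hsp v hv a b c (Or.inl ⟨hab, hbc⟩)) hch (hY y hy h hh) hrch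
    rwa [Finset.filter_union_eq_left_of_forall_not hYnot]
end

section
/- (Correctness of CCDC counting formula for Approval) Let (C,V) be an Approval election, p ∈ C, and k ≥ 0. Let k₀ be the number of candidates c ∈ C \ {p} whose approval score is at least that of p. If k₀ ≤ k, then the number of subsets C' ⊆ C \ {p} with |C'| ≤ k such that p is the unique Approval winner of (C − C', V) equals Σ_{i=0}^{k−k₀} C(|C| − k₀ − 1, i); if k₀ > k, this number is 0. -/
/-!
Scores do not change when candidates are deleted, so `p` wins uniquely after deleting `C'`
exactly when `C'` contains the set `B` of rivals scoring at least as much as `p`. The admissible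
`C'` are therefore the sets `B ∪ s` with `s ⊆ (C \ {p}) \ B` and `|s| ≤ k - |B|`, counted by
the binomial sum; when `|B| > k` there are none.
-/

open Finset

theorem card_powerset_filter_card_le {α : Type*} (X : Finset α) (m : ℕ) :
    #{s ∈ X.powerset | #s ≤ m} = ∑ i ∈ range (m + 1), (#X).choose i := by
  rw [card_eq_sum_card_fiberwise (f := card) (t := range (m + 1))
    fun s hs => mem_range_succ_iff.2 (mem_filter.1 hs).2]
  refine sum_congr rfl fun i hi => ?_
  rw [filter_filter, ← card_powersetCard i X, powersetCard_eq_filter]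
  congr 1
  exact filter_congr fun s _ => ⟨And.right, by rintro rfl; exact ⟨mem_range_succ_iff.1 hi, rfl⟩⟩

section

variable {α : Type*} [DecidableEq α]

theorem card_Icc_filter_card_le {B A : Finset α} (hBA : B ⊆ A) (m : ℕ) :
    #{C ∈ Icc B A | #C ≤ #B + m} = ∑ i ∈ range (m + 1), (#A - #B).choose i := by
  have hdisj {s} (hs : s ∈ (A \ B).powerset) : Disjoint B s :=
    (disjoint_of_subset_left (mem_powerset.1 hs) sdiff_disjoint).symm
  have hinj : Set.InjOn (B ∪ ·) (A \ B).powerset := fun s hs t ht hst => by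
    simpa [union_sdiff_cancel_left (hdisj hs), union_sdiff_cancel_left (hdisj ht)] using
      congrArg (· \ B) hst
  rw [Icc_eq_image_powerset hBA, filter_image,
    card_image_of_injOn (hinj.mono (filter_subset _ _)),
    ← card_sdiff_of_subset hBA, ← card_powerset_filter_card_le]
  congr 1
  exact filter_congr fun s hs => by rw [card_union_of_disjoint (hdisj hs)]; omega

theorem forall_lt_score_iff_subset (Cs C' : Finset α) (p : α) (score : α → ℕ) :
    (∀ c ∈ Cs \ C', c ≠ p → score c < score p) ↔
      {c ∈ Cs.erase p | score p ≤ score c} ⊆ C' := by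
  constructor
  · intro h c hc
    obtain ⟨⟨hcp, hcCs⟩, hle⟩ := by simpa only [mem_filter, mem_erase] using hc
    by_contra hcC
    exact (h c (mem_sdiff.2 ⟨hcCs, hcC⟩) hcp).not_ge hle
  · intro h c hc hcp
    by_contra! hle
    exact (mem_sdiff.1 hc).2 (h (mem_filter.2 ⟨mem_erase.2 ⟨hcp, (mem_sdiff.1 hc).1⟩, hle⟩))

end

/-- Correctness of the CCDC counting formula for Approval: with `k₀` the number of
candidates `c ≠ p` whose approval score is at least `p`'s, the number of subsets
`C' ⊆ C \ {p}` with `|C'| ≤ k` such that `p` is the unique approval winner of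
`(C − C', V)` is `∑_{i=0}^{k−k₀} C(|C|−k₀−1, i)` if `k₀ ≤ k`, and `0` otherwise. -/
theorem approval_ccdc_count {C : Type*} [DecidableEq C]
    (Cs : Finset C) (p : C) (hp : p ∈ Cs) (score : C → ℕ) (k : ℕ) :
    (((Cs.erase p).filter (fun c => score p ≤ score c)).card ≤ k →
      ((Cs.erase p).powerset.filter (fun C' => C'.card ≤ k ∧
          ∀ c ∈ Cs \ C', c ≠ p → score c < score p)).card =
        ∑ i ∈ Finset.range
            (k - ((Cs.erase p).filter (fun c => score p ≤ score c)).card + 1),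
          (Cs.card - ((Cs.erase p).filter (fun c => score p ≤ score c)).card - 1).choose i) ∧
    (k < ((Cs.erase p).filter (fun c => score p ≤ score c)).card →
      ((Cs.erase p).powerset.filter (fun C' => C'.card ≤ k ∧
          ∀ c ∈ Cs \ C', c ≠ p → score c < score p)).card = 0) := by
  set A := Cs.erase p
  set B := A.filter (fun c => score p ≤ score c)
  have hBA : B ⊆ A := filter_subset _ _
  have hwinners : A.powerset.filter (fun C' => C'.card ≤ k ∧
      ∀ c ∈ Cs \ C', c ≠ p → score c < score p) = {C' ∈ Icc B A | #C' ≤ k} := by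
    ext C'
    simp only [mem_filter, mem_powerset, mem_Icc, forall_lt_score_iff_subset]
    tauto
  rw [hwinners]
  refine ⟨fun hk => ?_, fun hk => ?_⟩
  · obtain ⟨m, rfl⟩ := Nat.exists_eq_add_of_le hk
    rw [card_Icc_filter_card_le hBA, card_erase_of_mem hp, Nat.add_sub_cancel_left,
      Nat.sub_right_comm]
  · exact card_eq_zero.2 <| filter_false_of_mem fun C' hC' hle =>
      hk.not_ge <| (card_le_card (mem_Icc.1 hC').1).trans hle
end

section
/- (Matching characterization for 2-Approval CCDV construction) Let G be a bipartite graph with parts X = {x₁,…,x_n}, Y = {y₁,…,y_n} and edges e₁,…,e_m, let D = max degree, and assume D ≥ 2. Construct the 2-Approval election as in the reduction: C = {p} ∪ X ∪ Y ∪ B with |B| = T + D dummies (T = Σ_v (D − d(v))), voters so that p and every vertex-candidate have score D and every dummy has score 1, where voter v_ℓ (for edge e_ℓ = {x_i, y_j}) gives one point each to x_i and y_j. Then the subsets V' of voters with |V'| ≤ n whose deletion makes p the unique 2-Approval winner are exactly the sets {v_ℓ : e_ℓ ∈ M} for perfect matchings M of G; in particular their number equals the number of perfect matchings of G. -/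
/-!
Deleting `V'` lowers the score of each candidate by the number of deleted voters approving it.
If `p` becomes the unique winner, each of the `2n` vertex candidates must lose strictly more
points than `p`, hence at least one. Since at most `n` voters, each with two approvals, are
deleted, the count `2n ≤ ∑ losses ≤ 2 |V'| ≤ 2n` is tight: exactly `n` voters are deleted,
all their approvals are vertex candidates (so they are edge voters, as filler voters approve
a dummy), and every vertex loses exactly one point (so the deleted edges are disjoint).
Conversely, deleting a perfect matching costs every vertex one point and `p` none, and dummies
never exceed `1 < D`.
-/

open Finset

section ApprovalScore

variable {C ι : Type*} [DecidableEq C]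

def approvalScore (appr : ι → Finset C) (W : Finset ι) (c : C) : ℕ :=
  #{v ∈ W | c ∈ appr v}

def IsUniqueWinner (appr : ι → Finset C) (W : Finset ι) (Call : Finset C) (p : C) : Prop :=
  ∀ c ∈ Call, c ≠ p → approvalScore appr W c < approvalScore appr W p

variable {appr : ι → Finset C}

theorem approvalScore_mono {V W : Finset ι} (h : V ⊆ W) (c : C) :
    approvalScore appr V c ≤ approvalScore appr W c :=
  card_le_card (filter_subset_filter _ h)

theorem approvalScore_sdiff [DecidableEq ι] {V W : Finset ι} (h : V ⊆ W) (c : C) :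
    approvalScore appr (W \ V) c = approvalScore appr W c - approvalScore appr V c := by
  have hfilter :
      {v ∈ W \ V | c ∈ appr v} = {v ∈ W | c ∈ appr v} \ {v ∈ V | c ∈ appr v} := by
    ext v; simp only [mem_filter, mem_sdiff]; tauto
  rw [approvalScore, hfilter, card_sdiff_of_subset (filter_subset_filter _ h)]
  rfl

theorem approvalScore_eq_zero {W : Finset ι} {c : C} (h : ∀ v ∈ W, c ∉ appr v) :
    approvalScore appr W c = 0 :=
  card_eq_zero.2 (filter_eq_empty_iff.2 h)

theorem sum_approvalScore (S : Finset C) (W : Finset ι) :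
    ∑ c ∈ S, approvalScore appr W c = ∑ v ∈ W, #(appr v ∩ S) := by
  simpa [approvalScore, bipartiteAbove, bipartiteBelow, filter_mem_eq_inter, inter_comm] using
    sum_card_bipartiteAbove_eq_sum_card_bipartiteBelow (s := S) (t := W) (fun c v => c ∈ appr v)

theorem sum_approvalScore_le (S : Finset C) (W : Finset ι) :
    ∑ c ∈ S, approvalScore appr W c ≤ ∑ v ∈ W, #(appr v) := by
  rw [sum_approvalScore]
  exact sum_le_sum fun v _ => card_le_card inter_subset_left

theorem sum_approvalScore_eq_iff (S : Finset C) (W : Finset ι) :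
    ∑ c ∈ S, approvalScore appr W c = ∑ v ∈ W, #(appr v) ↔ ∀ v ∈ W, appr v ⊆ S := by
  rw [sum_approvalScore, sum_eq_sum_iff_of_le fun v _ => card_le_card inter_subset_left]
  refine forall₂_congr fun v _ => ?_
  rw [← inter_eq_left]
  exact ⟨eq_of_subset_of_card_le inter_subset_left ∘ Eq.ge, congrArg card⟩

theorem approvalScore_le_one_of_pairwiseDisjoint {W : Finset ι}
    (h : (W : Set ι).PairwiseDisjoint appr) (c : C) : approvalScore appr W c ≤ 1 := by
  refine card_le_one.2 fun v hv w hw => ?_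
  rw [mem_filter] at hv hw
  by_contra hvw
  exact disjoint_left.1 (h hv.1 hw.1 hvw) hv.2 hw.2

theorem pairwiseDisjoint_of_approvalScore_le_one {S : Finset C} {W : Finset ι}
    (hsub : ∀ v ∈ W, appr v ⊆ S) (h : ∀ c ∈ S, approvalScore appr W c ≤ 1) :
    (W : Set ι).PairwiseDisjoint appr := by
  intro v hv w hw hvw
  refine disjoint_left.2 fun c hcv hcw => hvw ?_
  exact card_le_one.1 (h c (hsub v hv hcv)) v (mem_filter.2 ⟨hv, hcv⟩) w
    (mem_filter.2 ⟨hw, hcw⟩)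

theorem approvalScore_eq_one_of_pairwiseDisjoint {T : Finset C} {W : Finset ι}
    (hdisj : (W : Set ι).PairwiseDisjoint appr) (hone : ∀ v ∈ W, #(appr v ∩ T) = 1)
    (hcard : #W = #T) : ∀ c ∈ T, approvalScore appr W c = 1 := by
  refine (sum_eq_sum_iff_of_le fun c _ => approvalScore_le_one_of_pairwiseDisjoint hdisj c).1 ?_
  rw [sum_approvalScore, sum_congr rfl hone, sum_const, sum_const, hcard]

end ApprovalScore

section Reduction

variable {C ι : Type*} [DecidableEq C] [DecidableEq ι] {appr : ι → Finset C}
  {Call S Xs Ys : Finset C} {p : C} {Vall VE V' : Finset ι} {n D : ℕ}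

theorem subset_and_card_eq_and_pairwiseDisjoint_of_isUniqueWinner_sdiff (hSC : S ⊆ Call)
    (hpS : p ∉ S) (hS : #S = 2 * n) (happr : ∀ v ∈ Vall, #(appr v) = 2)
    (hmem : ∀ v ∈ Vall, appr v ⊆ S → v ∈ VE)
    (hscore : ∀ z ∈ S, approvalScore appr Vall z = approvalScore appr Vall p)
    (hV' : V' ⊆ Vall) (hcard : #V' ≤ n) (hwin : IsUniqueWinner appr (Vall \ V') Call p) :
    V' ⊆ VE ∧ #V' = n ∧ (V' : Set ι).PairwiseDisjoint appr := by
  have hlost : ∀ z ∈ S, approvalScore appr V' p < approvalScore appr V' z := by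
    intro z hz
    have hz_lt := hwin z (hSC hz) (ne_of_mem_of_not_mem hz hpS)
    rw [approvalScore_sdiff hV', approvalScore_sdiff hV', hscore z hz] at hz_lt
    have hz_le := approvalScore_mono hV' (appr := appr) z
    have hp_le := approvalScore_mono hV' (appr := appr) p
    omega
  have hpos : ∀ z ∈ S, 1 ≤ approvalScore appr V' z := fun z hz => by
    have := hlost z hz; omega
  have hlower : #S ≤ ∑ z ∈ S, approvalScore appr V' z := by
    simpa using card_nsmul_le_sum S _ 1 hpos
  have hupper : ∑ v ∈ V', #(appr v) = 2 * #V' := by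
    rw [sum_congr rfl fun v hv => happr v (hV' hv), sum_const, smul_eq_mul, mul_comm]
  have hle := sum_approvalScore_le S V' (appr := appr)
  -- The chain `#S ≤ ∑ scores ≤ 2 #V' ≤ 2 n = #S` is tight throughout.
  have hsum : ∑ z ∈ S, approvalScore appr V' z = #S := by omega
  have hsub : ∀ v ∈ V', appr v ⊆ S := (sum_approvalScore_eq_iff S V').1 (by omega)
  refine ⟨fun v hv => hmem v (hV' hv) (hsub v hv), by omega, ?_⟩
  refine pairwiseDisjoint_of_approvalScore_le_one hsub
    fun z hz => ((sum_eq_sum_iff_of_le hpos).1 ?_ z hz).ge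
  rw [hsum, sum_const, smul_eq_mul, mul_one]

theorem isUniqueWinner_sdiff_of_pairwiseDisjoint (hXY : Disjoint Xs Ys) (hpXY : p ∉ Xs ∪ Ys)
    (hXn : #Xs = n) (hYn : #Ys = n) (hD : 2 ≤ D)
    (hedge : ∀ v ∈ VE, ∃ x ∈ Xs, ∃ y ∈ Ys, appr v = {x, y})
    (hscorep : approvalScore appr Vall p = D)
    (hscoreXY : ∀ z ∈ Xs ∪ Ys, approvalScore appr Vall z = D)
    (hscoreB : ∀ b ∈ Call \ insert p (Xs ∪ Ys), approvalScore appr Vall b = 1)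
    (hV' : V' ⊆ Vall) (hV'E : V' ⊆ VE) (hcard : #V' = n)
    (hdisj : (V' : Set ι).PairwiseDisjoint appr) :
    IsUniqueWinner appr (Vall \ V') Call p := by
  have hp : approvalScore appr V' p = 0 := approvalScore_eq_zero fun v hv hpv => by
    obtain ⟨x, hx, y, hy, hxy⟩ := hedge v (hV'E hv)
    rw [hxy, mem_insert, mem_singleton] at hpv
    rcases hpv with rfl | rfl
    exacts [hpXY (mem_union_left _ hx), hpXY (mem_union_right _ hy)]
  have hX : ∀ x ∈ Xs, approvalScore appr V' x = 1 := by
    refine approvalScore_eq_one_of_pairwiseDisjoint hdisj (fun v hv => ?_) (hcard.trans hXn.symm)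
    obtain ⟨x, hx, y, hy, hxy⟩ := hedge v (hV'E hv)
    rw [hxy, insert_inter_of_mem hx, singleton_inter_of_notMem (disjoint_right.1 hXY hy)]
    rfl
  have hY : ∀ y ∈ Ys, approvalScore appr V' y = 1 := by
    refine approvalScore_eq_one_of_pairwiseDisjoint hdisj (fun v hv => ?_) (hcard.trans hYn.symm)
    obtain ⟨x, hx, y, hy, hxy⟩ := hedge v (hV'E hv)
    rw [hxy, insert_inter_of_notMem (disjoint_left.1 hXY hx), singleton_inter_of_mem hy]
    rfl
  intro c hc hcp
  rw [approvalScore_sdiff hV', approvalScore_sdiff hV', hscorep, hp]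
  by_cases hcXY : c ∈ Xs ∪ Ys
  · rw [hscoreXY c hcXY, (mem_union.1 hcXY).elim (hX c) (hY c)]
    omega
  · rw [hscoreB c (mem_sdiff.2 ⟨hc, by simp [hcp, hcXY]⟩)]
    omega

end Reduction

theorem twoApproval_ccdv_matching_general {C ι : Type*} [DecidableEq C] [DecidableEq ι]
    (Call : Finset C) (p : C) (Xs Ys : Finset C) (n : ℕ)
    (Vall VE : Finset ι) (appr : ι → Finset C) (D : ℕ)
    (hXC : Xs ⊆ Call) (hYC : Ys ⊆ Call)
    (hXY : Disjoint Xs Ys) (hpXY : p ∉ Xs ∪ Ys)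
    (hXn : Xs.card = n) (hYn : Ys.card = n)
    (hD : 2 ≤ D)
    (happr : ∀ v ∈ Vall, appr v ⊆ Call ∧ (appr v).card = 2)
    (hVE : VE ⊆ Vall)
    (hedge : ∀ v ∈ VE, ∃ x ∈ Xs, ∃ y ∈ Ys, appr v = {x, y})
    (hfill : ∀ v ∈ Vall, v ∉ VE →
      ∃ z ∈ insert p (Xs ∪ Ys), ∃ b ∈ Call \ insert p (Xs ∪ Ys), appr v = {z, b})
    (hscorep : (Vall.filter (fun v => p ∈ appr v)).card = D)
    (hscoreXY : ∀ z ∈ Xs ∪ Ys, (Vall.filter (fun v => z ∈ appr v)).card = D)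
    (hscoreB : ∀ b ∈ Call \ insert p (Xs ∪ Ys),
      (Vall.filter (fun v => b ∈ appr v)).card = 1) :
    (∀ V' ⊆ Vall, V'.card ≤ n →
      ((∀ c ∈ Call, c ≠ p →
          ((Vall \ V').filter (fun v => c ∈ appr v)).card <
            ((Vall \ V').filter (fun v => p ∈ appr v)).card) ↔
        (V' ⊆ VE ∧ V'.card = n ∧
          (V' : Set ι).Pairwise (fun v w => Disjoint (appr v) (appr w))))) ∧
    (Vall.powerset.filter (fun V' => V'.card ≤ n ∧ ∀ c ∈ Call, c ≠ p →
          ((Vall \ V').filter (fun v => c ∈ appr v)).card <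
            ((Vall \ V').filter (fun v => p ∈ appr v)).card)).card =
      (VE.powerset.filter (fun (M : Finset ι) => M.card = n ∧
          (M : Set ι).Pairwise (fun v w => Disjoint (appr v) (appr w)))).card := by
  have hXYn : #(Xs ∪ Ys) = 2 * n := by rw [card_union_of_disjoint hXY, hXn, hYn, two_mul]
  have hmem : ∀ v ∈ Vall, appr v ⊆ Xs ∪ Ys → v ∈ VE := fun v hv hsub => by
    by_contra hvE
    obtain ⟨z, -, b, hb, hzb⟩ := hfill v hv hvE
    have hbv : b ∈ appr v := by simp [hzb]
    exact (mem_sdiff.1 hb).2 (mem_insert_of_mem (hsub hbv))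
  have key : ∀ V' ⊆ Vall, #V' ≤ n → (IsUniqueWinner appr (Vall \ V') Call p ↔
      V' ⊆ VE ∧ #V' = n ∧ (V' : Set ι).PairwiseDisjoint appr) := fun V' hV' hcard =>
    ⟨subset_and_card_eq_and_pairwiseDisjoint_of_isUniqueWinner_sdiff (union_subset hXC hYC) hpXY
      hXYn (fun v hv => (happr v hv).2) hmem (fun z hz => (hscoreXY z hz).trans hscorep.symm)
      hV' hcard,
    fun ⟨hV'E, hn, hdisj⟩ => isUniqueWinner_sdiff_of_pairwiseDisjoint hXY hpXY hXn hYn hD hedge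
      hscorep hscoreXY hscoreB hV' hV'E hn hdisj⟩
  refine ⟨key, congrArg card (ext fun V' => ?_)⟩
  simp only [mem_filter, mem_powerset]
  exact ⟨fun ⟨hV', hcard, hwin⟩ => (key V' hV' hcard).1 hwin,
    fun hM => ⟨hM.1.trans hVE, hM.2.1.le, (key V' (hM.1.trans hVE) hM.2.1.le).2 hM⟩⟩

/-- Matching characterization for the 2-Approval CCDV construction.
The election: candidates `Call` consist of `p`, vertex candidates `Xs ∪ Ys`
(`|Xs| = |Ys| = n`), and dummies `Call \ ({p} ∪ Xs ∪ Ys)`. Each voter approves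
exactly two candidates: edge voters (in `VE`) approve `{x,y}` with `x ∈ Xs`,
`y ∈ Ys` (distinct voters correspond to distinct edges), and filler voters approve
one candidate from `{p} ∪ Xs ∪ Ys` and one dummy. Scores: `p` and every vertex
candidate have score `D ≥ 2`, every dummy has score `1`. Then the subsets `V'` of
voters with `|V'| ≤ n` whose deletion makes `p` the unique 2-Approval winner are
exactly the sets of edge voters forming a perfect matching, and their number equals
the number of perfect matchings. -/
theorem twoApproval_ccdv_matching {C ι : Type*} [DecidableEq C] [DecidableEq ι]
    (Call : Finset C) (p : C) (Xs Ys : Finset C) (n : ℕ)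
    (Vall VE : Finset ι) (appr : ι → Finset C) (D : ℕ)
    (hpC : p ∈ Call) (hXC : Xs ⊆ Call) (hYC : Ys ⊆ Call)
    (hXY : Disjoint Xs Ys) (hpXY : p ∉ Xs ∪ Ys)
    (hXn : Xs.card = n) (hYn : Ys.card = n)
    (hD : 2 ≤ D)
    (happr : ∀ v ∈ Vall, appr v ⊆ Call ∧ (appr v).card = 2)
    (hVE : VE ⊆ Vall)
    (hedge : ∀ v ∈ VE, ∃ x ∈ Xs, ∃ y ∈ Ys, appr v = {x, y})
    (hinj : ∀ v ∈ VE, ∀ w ∈ VE, appr v = appr w → v = w)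
    (hfill : ∀ v ∈ Vall, v ∉ VE →
      ∃ z ∈ insert p (Xs ∪ Ys), ∃ b ∈ Call \ insert p (Xs ∪ Ys), appr v = {z, b})
    (hscorep : (Vall.filter (fun v => p ∈ appr v)).card = D)
    (hscoreXY : ∀ z ∈ Xs ∪ Ys, (Vall.filter (fun v => z ∈ appr v)).card = D)
    (hscoreB : ∀ b ∈ Call \ insert p (Xs ∪ Ys),
      (Vall.filter (fun v => b ∈ appr v)).card = 1) :
    (∀ V' ⊆ Vall, V'.card ≤ n →
      ((∀ c ∈ Call, c ≠ p →
          ((Vall \ V').filter (fun v => c ∈ appr v)).card <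
            ((Vall \ V').filter (fun v => p ∈ appr v)).card) ↔
        (V' ⊆ VE ∧ V'.card = n ∧
          (V' : Set ι).Pairwise (fun v w => Disjoint (appr v) (appr w))))) ∧
    (Vall.powerset.filter (fun V' => V'.card ≤ n ∧ ∀ c ∈ Call, c ≠ p →
          ((Vall \ V').filter (fun v => c ∈ appr v)).card <
            ((Vall \ V').filter (fun v => p ∈ appr v)).card)).card =
      (VE.powerset.filter (fun (M : Finset ι) => M.card = n ∧
          (M : Set ι).Pairwise (fun v w => Disjoint (appr v) (appr w)))).card :=
  twoApproval_ccdv_matching_general Call p Xs Ys n Vall VE appr D hXC hYC hXY hpXY hXn hYn hD happr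
    hVE hedge hfill hscorep hscoreXY hscoreB
end

section
/- (Matchings of bounded size and 2-Approval CCAV solutions) Let G be a bipartite graph with parts X, Y of size n and edges e₁,…,e_m. Consider the 2-Approval election with candidates C = {p, b₁, b₂} ∪ X ∪ Y, registered voters v₁: p > b₁ > ⋯ and v₂: p > b₂ > ⋯ (so p has score 2, b₁, b₂ have score 1, all vertex-candidates score 0), and unregistered voters w₁,…,w_m where w_ℓ (for e_ℓ = {x_i, y_j}) votes x_i > y_j > ⋯. Then for any budget t ≤ n, a subset W' of unregistered voters is a solution (i.e. p is the unique 2-Approval winner of (C, V ∪ W')) iff |W'| ≤ t and {e_ℓ : w_ℓ ∈ W'} is a matching in G. Hence the number of solutions with budget n minus the number with budget n−1 equals the number of perfect matchings of G. -/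
/-- Matchings of bounded size and 2-Approval CCAV solutions. Candidates are `p`,
`b1`, `b2`, and vertex candidates `Xs ∪ Ys` (`|Xs| = |Ys| = n ≥ 1`); base scores from
the registered voters are `2` for `p`, `1` for `b1` and `b2`, and `0` for all vertex
candidates. Each unregistered voter `w ∈ W` approves `{x,y}` with `x ∈ Xs`, `y ∈ Ys`
(distinct voters correspond to distinct edges). Then: (a) for every budget `t ≤ n`,
a subset `W' ⊆ W` with `|W'| ≤ t` makes `p` the unique 2-Approval winner iff the
corresponding edges form a matching; (b) the number of solutions with budget `n`
minus the number with budget `n − 1` equals the number of perfect matchings. -/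
theorem twoApproval_ccav_matching {C ι : Type*} [DecidableEq C] [DecidableEq ι]
    (p b1 b2 : C) (Xs Ys : Finset C) (n : ℕ) (hn : 1 ≤ n)
    (hXn : Xs.card = n) (hYn : Ys.card = n) (hXY : Disjoint Xs Ys)
    (hp : p ∉ Xs ∪ Ys) (hb1 : b1 ∉ Xs ∪ Ys) (hb2 : b2 ∉ Xs ∪ Ys)
    (hpb1 : p ≠ b1) (hpb2 : p ≠ b2) (hb12 : b1 ≠ b2)
    (W : Finset ι) (appr : ι → Finset C)
    (hedge : ∀ w ∈ W, ∃ x ∈ Xs, ∃ y ∈ Ys, appr w = {x, y})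
    (hinj : ∀ v ∈ W, ∀ w ∈ W, appr v = appr w → v = w)
    (base : C → ℕ) (hbp : base p = 2) (hbb1 : base b1 = 1) (hbb2 : base b2 = 1)
    (hbz : ∀ z ∈ Xs ∪ Ys, base z = 0) :
    (∀ t ≤ n, ∀ W' ⊆ W,
      ((W'.card ≤ t ∧ ∀ c ∈ insert b1 (insert b2 (Xs ∪ Ys)),
          base c + (W'.filter (fun w => c ∈ appr w)).card <
            base p + (W'.filter (fun w => p ∈ appr w)).card) ↔
        (W'.card ≤ t ∧
          (W' : Set ι).Pairwise (fun v w => Disjoint (appr v) (appr w))))) ∧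
    ((W.powerset.filter (fun (W' : Finset ι) => W'.card ≤ n ∧
          ∀ c ∈ insert b1 (insert b2 (Xs ∪ Ys)),
            base c + (W'.filter (fun w => c ∈ appr w)).card <
              base p + (W'.filter (fun w => p ∈ appr w)).card)).card -
        (W.powerset.filter (fun (W' : Finset ι) => W'.card ≤ n - 1 ∧
          ∀ c ∈ insert b1 (insert b2 (Xs ∪ Ys)),
            base c + (W'.filter (fun w => c ∈ appr w)).card <
              base p + (W'.filter (fun w => p ∈ appr w)).card)).card) =
      (W.powerset.filter (fun (M : Finset ι) => M.card = n ∧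
          (M : Set ι).Pairwise (fun v w => Disjoint (appr v) (appr w)))).card := by

  have happr : ∀ w ∈ W, appr w ⊆ Xs ∪ Ys := by
    intro w hw
    obtain ⟨x, hx, y, hy, he⟩ := hedge w hw
    rw [he]
    intro z hz
    simp only [Finset.mem_insert, Finset.mem_singleton] at hz
    rcases hz with rfl | rfl
    · exact Finset.mem_union_left _ hx
    · exact Finset.mem_union_right _ hy
  have core : ∀ W' ⊆ W,
      ((∀ c ∈ insert b1 (insert b2 (Xs ∪ Ys)),
          base c + (W'.filter (fun w => c ∈ appr w)).card <
            base p + (W'.filter (fun w => p ∈ appr w)).card) ↔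
        (W' : Set ι).Pairwise (fun v w => Disjoint (appr v) (appr w))) := by
    intro W' hW'
    have hpfil : W'.filter (fun w => p ∈ appr w) = ∅ := by
      rw [Finset.filter_eq_empty_iff]
      intro w hw hp'
      exact hp (happr w (hW' hw) hp')
    constructor
    · intro h v hv w hw hvw
      rw [Finset.mem_coe] at hv hw
      by_contra hnd
      rw [Finset.disjoint_left] at hnd
      push_neg at hnd
      obtain ⟨z, hzv, hzw⟩ := hnd
      have hz : z ∈ Xs ∪ Ys := happr v (hW' hv) hzv
      have hlt := h z (by simp [hz])
      rw [hpfil, hbz z hz, hbp] at hlt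
      simp only [Finset.card_empty, Nat.add_zero, Nat.zero_add] at hlt
      have h2 : ({v, w} : Finset ι) ⊆ W'.filter (fun u => z ∈ appr u) := by
        intro u hu
        simp only [Finset.mem_insert, Finset.mem_singleton] at hu
        rcases hu with rfl | rfl <;> simp [Finset.mem_filter, hv, hw, hzv, hzw]
      have hcard := Finset.card_le_card h2
      rw [Finset.card_insert_of_notMem (by simp [hvw]), Finset.card_singleton] at hcard
      omega
    · intro hpw c hc
      rw [hpfil, hbp]
      simp only [Finset.card_empty, Nat.add_zero]
      simp only [Finset.mem_insert] at hc
      rcases hc with rfl | rfl | hc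
      · have hfe : W'.filter (fun w => c ∈ appr w) = ∅ := by
          rw [Finset.filter_eq_empty_iff]
          intro w hw h
          exact hb1 (happr w (hW' hw) h)
        rw [hfe, hbb1]
        simp
      · have hfe : W'.filter (fun w => c ∈ appr w) = ∅ := by
          rw [Finset.filter_eq_empty_iff]
          intro w hw h
          exact hb2 (happr w (hW' hw) h)
        rw [hfe, hbb2]
        simp
      · have hle : (W'.filter (fun w => c ∈ appr w)).card ≤ 1 := by
          rw [Finset.card_le_one]
          intro a ha b hb
          simp only [Finset.mem_filter] at ha hb
          by_contra hab
          exact (Finset.disjoint_left.mp (hpw ha.1 hb.1 hab) ha.2) hb.2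
        rw [hbz c hc]
        omega
  constructor
  · intro t ht W' hW'
    exact and_congr_right fun _ => core W' hW'
  · have hBA : (W.powerset.filter (fun (W' : Finset ι) => W'.card ≤ n - 1 ∧
          ∀ c ∈ insert b1 (insert b2 (Xs ∪ Ys)),
            base c + (W'.filter (fun w => c ∈ appr w)).card <
              base p + (W'.filter (fun w => p ∈ appr w)).card)) ⊆
        (W.powerset.filter (fun (W' : Finset ι) => W'.card ≤ n ∧
          ∀ c ∈ insert b1 (insert b2 (Xs ∪ Ys)),
            base c + (W'.filter (fun w => c ∈ appr w)).card <
              base p + (W'.filter (fun w => p ∈ appr w)).card)) := by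
      intro x hx
      simp only [Finset.mem_filter] at hx ⊢
      exact ⟨hx.1, by omega, hx.2.2⟩
    rw [← Finset.card_sdiff_of_subset hBA]
    congr 1
    ext x
    simp only [Finset.mem_sdiff, Finset.mem_filter, Finset.mem_powerset]
    constructor
    · rintro ⟨⟨hxW, hxn, hP⟩, hnB⟩
      refine ⟨hxW, ?_, (core x hxW).mp hP⟩
      by_contra hne
      exact hnB ⟨hxW, by omega, hP⟩
    · rintro ⟨hxW, hxn, hM⟩
      refine ⟨⟨hxW, by omega, (core x hxW).mpr hM⟩, ?_⟩
      rintro ⟨-, hle, -⟩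
      omega
end

section
/- (Exact cover characterization for Condorcet CCAV construction) Let B = {b₁,…,b_{3k}} with k ≥ 4 and S = {S₁,…,S_n} a family of 3-element subsets of B. Build the election with C = B ∪ {p}, V consisting of k − 3 voters each with order b₁ > b₂ > ⋯ > b_{3k} > p, and for each S_j = {b_{j1}, b_{j2}, b_{j3}} an unregistered voter w_j with order b_{j1} > b_{j2} > b_{j3} > p > (rest). Then a subset W' of unregistered voters with |W'| ≤ k makes p the Condorcet winner of (C, V ∪ W') if and only if |W'| = k and the corresponding sets {S_j : w_j ∈ W'} form an exact cover of B (k sets whose union is B, pairwise disjoint). In particular, the number of such W' equals the number of exact covers of B by k sets from S. -/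
/-!
Let `c b` be the number of chosen voters whose set contains `b`. Since `p` beats `b` by
`|W'| - c b` votes against `(k - 3) + c b`, the condition reads `k - 3 + 2 c b < |W'|`, and
double counting gives `∑ c b = 3 |W'|`. If `|W'| < k` this forces every `c b = 0`, hence
`W' = ∅`, where the condition fails; so `|W'| = k`, every `c b ≤ 1`, and the sum `3k = |B|` forces
`c b = 1` for all `b`, which is exactly an exact cover.
-/

open scoped Classical

open Finset

section ExactCover

variable {β ι : Type*} [DecidableEq β] {Bs : Finset β} {W : Finset ι} {S : ι → Finset β}

lemma sum_card_filter_mem_eq_sum_card (hS : ∀ j ∈ W, S j ⊆ Bs) :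
    ∑ b ∈ Bs, #{j ∈ W | b ∈ S j} = ∑ j ∈ W, #(S j) := by
  refine (sum_card_bipartiteAbove_eq_sum_card_bipartiteBelow (r := fun b j => b ∈ S j)).trans
    (sum_congr rfl fun j hj => ?_)
  rw [bipartiteBelow, filter_mem_eq_inter, inter_eq_right.mpr (hS j hj)]

lemma pairwiseDisjoint_and_biUnion_eq_iff (hS : ∀ j ∈ W, S j ⊆ Bs) :
    (W : Set ι).PairwiseDisjoint S ∧ W.biUnion S = Bs ↔
      ∀ b ∈ Bs, #{j ∈ W | b ∈ S j} = 1 := by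
  constructor
  · rintro ⟨hdisj, hcover⟩ b hb
    obtain ⟨j, hj, hbj⟩ := mem_biUnion.mp (hcover ▸ hb)
    refine card_eq_one.mpr ⟨j, eq_singleton_iff_unique_mem.mpr ⟨mem_filter.mpr ⟨hj, hbj⟩, ?_⟩⟩
    intro i hi
    rw [mem_filter] at hi
    by_contra hne
    exact disjoint_left.mp (hdisj hi.1 hj hne) hi.2 hbj
  · intro hone
    refine ⟨fun i hi j hj hne => disjoint_left.mpr fun b hbi hbj => hne ?_, ?_⟩
    · exact card_le_one.mp (hone b (hS i hi hbi)).le i (mem_filter.mpr ⟨hi, hbi⟩) j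
        (mem_filter.mpr ⟨hj, hbj⟩)
    · refine Subset.antisymm (biUnion_subset.mpr hS) fun b hb => ?_
      obtain ⟨j, hj⟩ := card_pos.mp ((hone b hb).symm ▸ Nat.one_pos)
      exact mem_biUnion.mpr ⟨j, (mem_filter.mp hj).1, (mem_filter.mp hj).2⟩

end ExactCover

lemma forall_sub_three_add_two_mul_lt_iff {α : Type*} {s : Finset α} {c : α → ℕ} {k n : ℕ}
    (hk : 3 ≤ k) (hs : #s = 3 * k) (hn : n ≤ k) (hc : ∑ b ∈ s, c b = 3 * n) :
    (∀ b ∈ s, k - 3 + 2 * c b < n) ↔ n = k ∧ ∀ b ∈ s, c b = 1 := by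
  constructor
  · intro h
    have hnk : n = k := by
      by_contra hne
      have hzero : ∀ b ∈ s, c b = 0 := fun b hb => by have := h b hb; omega
      have hn0 : n = 0 := by have := sum_eq_zero hzero; omega
      obtain ⟨b, hb⟩ : s.Nonempty := card_pos.mp (by omega)
      have := h b hb
      omega
    have hle : ∀ b ∈ s, c b ≤ 1 := fun b hb => by have := h b hb; omega
    refine ⟨hnk, (sum_eq_sum_iff_of_le hle).mp ?_⟩
    rw [hc, sum_const, smul_eq_mul, mul_one, hs, hnk]
  · rintro ⟨rfl, hone⟩ b hb
    rw [hone b hb]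
    omega

theorem condorcet_ccav_exact_cover_general {β ι : Type*} [DecidableEq β]
    (k : ℕ) (hk : 4 ≤ k) (Bs : Finset β) (hB : Bs.card = 3 * k)
    (Wall : Finset ι) (S : ι → Finset β)
    (hS : ∀ j ∈ Wall, S j ⊆ Bs ∧ (S j).card = 3) :
    (∀ W' ⊆ Wall, W'.card ≤ k →
      ((∀ b ∈ Bs,
          (k - 3) + (W'.filter (fun j => b ∈ S j)).card <
            (W'.filter (fun j => b ∉ S j)).card) ↔
        (W'.card = k ∧ (W' : Set ι).PairwiseDisjoint S ∧ W'.biUnion S = Bs))) ∧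
    (Wall.powerset.filter (fun (W' : Finset ι) => W'.card ≤ k ∧ ∀ b ∈ Bs,
        (k - 3) + (W'.filter (fun j => b ∈ S j)).card <
          (W'.filter (fun j => b ∉ S j)).card)).card =
      (Wall.powerset.filter (fun (W' : Finset ι) => W'.card = k ∧
          (W' : Set ι).PairwiseDisjoint S ∧ W'.biUnion S = Bs)).card := by
  have hwins : ∀ W' ⊆ Wall, #W' ≤ k →
      ((∀ b ∈ Bs, (k - 3) + #{j ∈ W' | b ∈ S j} < #{j ∈ W' | b ∉ S j}) ↔
        (#W' = k ∧ (W' : Set ι).PairwiseDisjoint S ∧ W'.biUnion S = Bs)) := by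
    intro W' hW hcard
    have hsub : ∀ j ∈ W', S j ⊆ Bs := fun j hj => (hS j (hW hj)).1
    have hcount : ∑ b ∈ Bs, #{j ∈ W' | b ∈ S j} = 3 * #W' := by
      rw [sum_card_filter_mem_eq_sum_card hsub, sum_congr rfl fun j hj => (hS j (hW hj)).2,
        sum_const, smul_eq_mul, mul_comm]
    rw [pairwiseDisjoint_and_biUnion_eq_iff hsub,
      ← forall_sub_three_add_two_mul_lt_iff (by omega) hB hcard hcount]
    refine forall₂_congr fun b _ => ?_
    have := card_filter_add_card_filter_not (s := W') (fun j => b ∈ S j)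
    omega
  refine ⟨hwins, congrArg card (filter_congr fun W' hW => ?_)⟩
  have hW := mem_powerset.mp hW
  exact ⟨fun ⟨hle, h⟩ => (hwins W' hW hle).mp h,
    fun h => ⟨h.1.le, (hwins W' hW h.1.le).mpr h⟩⟩

/-- Exact cover characterization for the Condorcet CCAV construction. Candidates are
`B ∪ {p}` with `|B| = 3k`, `k ≥ 4`. The `k − 3` registered voters all prefer every
`b ∈ B` to `p`; the unregistered voter indexed by `j` prefers exactly the three
elements of `S j` to `p`. Hence in `(C, V ∪ W')`, for `b ∈ B` we have
`N(b,p) = (k−3) + |{j ∈ W' : b ∈ S j}|` and `N(p,b) = |{j ∈ W' : b ∉ S j}|`.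
Then `W' ⊆ Wall` with `|W'| ≤ k` makes `p` the Condorcet winner iff `|W'| = k` and
`{S j : j ∈ W'}` is an exact cover of `B` (pairwise disjoint with union `B`); in
particular the number of such `W'` equals the number of exact covers. -/
theorem condorcet_ccav_exact_cover {β ι : Type*} [DecidableEq β] [DecidableEq ι]
    (k : ℕ) (hk : 4 ≤ k) (Bs : Finset β) (hB : Bs.card = 3 * k)
    (Wall : Finset ι) (S : ι → Finset β)
    (hS : ∀ j ∈ Wall, S j ⊆ Bs ∧ (S j).card = 3) :
    (∀ W' ⊆ Wall, W'.card ≤ k →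
      ((∀ b ∈ Bs,
          (k - 3) + (W'.filter (fun j => b ∈ S j)).card <
            (W'.filter (fun j => b ∉ S j)).card) ↔
        (W'.card = k ∧ (W' : Set ι).PairwiseDisjoint S ∧ W'.biUnion S = Bs))) ∧
    (Wall.powerset.filter (fun (W' : Finset ι) => W'.card ≤ k ∧ ∀ b ∈ Bs,
        (k - 3) + (W'.filter (fun j => b ∈ S j)).card <
          (W'.filter (fun j => b ∉ S j)).card)).card =
      (Wall.powerset.filter (fun (W' : Finset ι) => W'.card = k ∧
          (W' : Set ι).PairwiseDisjoint S ∧ W'.biUnion S = Bs)).card :=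
  condorcet_ccav_exact_cover_general k hk Bs hB Wall S hS
end
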